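/- arXiv:dg-ga/9412006 — 3 statements merged into one kernel-verified Lean document; each statement's English description precedes it below -/
import Mathlib

section
/- Let B be a path-connected topological space, let p : E → B be a real vector bundle of rank r, and let s : B → E be a continuous section. If r > 1, then the complement of the image of s in E is path-connected. -/
open Bundle Set

section Aux

variable {B : Type*} [TopologicalSpace B] {r : ℕ}
  {E : B → Type*} [∀ b, AddCommGroup (E b)] [∀ b, Module ℝ (E b)]
  [∀ b, TopologicalSpace (E b)] [TopologicalSpace (TotalSpace (Fin r → ℝ) E)]

private lemma symm_ne_section (s : ∀ b, E b)
    (e : Trivialization (Fin r → ℝ) (TotalSpace.proj : TotalSpace (Fin r → ℝ) E → B))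
    {b : B} (hb : b ∈ e.baseSet) {w : Fin r → ℝ} (hw : w ≠ 0) :
    e.symm b ((e ⟨b, s b⟩).2 + w) ≠ s b := by
  intro h
  have h2 := e.apply_mk_symm hb ((e ⟨b, s b⟩).2 + w)
  rw [h] at h2
  have h3 : (e ⟨b, s b⟩).2 = (e ⟨b, s b⟩).2 + w := congrArg Prod.snd h2
  exact hw (left_eq_add.mp h3)

private lemma one_ne_zero_pi (hr : 1 < r) : (1 : Fin r → ℝ) ≠ 0 := by
  intro h
  have := congrFun h ⟨0, by omega⟩
  norm_num at this

/-- Core lemma: along a continuous map into a trivialization's base set, two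
non-section points over the endpoints are joined in the complement of the section. -/
private lemma core_joined (hr : 1 < r) (s : ∀ b, E b)
    (hs : Continuous fun b => (TotalSpace.mk b (s b) : TotalSpace (Fin r → ℝ) E))
    (e : Trivialization (Fin r → ℝ) (TotalSpace.proj : TotalSpace (Fin r → ℝ) E → B))
    (φ : unitInterval → B) (hφ : Continuous φ) (hmem : ∀ t, φ t ∈ e.baseSet)
    (v : E (φ 0)) (v' : E (φ 1)) (hv : v ≠ s (φ 0)) (hv' : v' ≠ s (φ 1)) :
    JoinedIn {p : TotalSpace (Fin r → ℝ) E | p.2 ≠ s p.proj}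
      ⟨φ 0, v⟩ ⟨φ 1, v'⟩ := by
  set σ : B → (Fin r → ℝ) := fun u => (e ⟨u, s u⟩).2 with hσdef
  have hσ : ContinuousOn σ e.baseSet := by
    have h1 : ContinuousOn (fun u => e (TotalSpace.mk u (s u))) e.baseSet :=
      e.continuousOn.comp hs.continuousOn (fun u hu => by simpa [e.source_eq] using hu)
    exact continuous_snd.comp_continuousOn h1
  have hrank : 1 < Module.rank ℝ (Fin r → ℝ) := by
    rw [rank_fin_fun]
    exact_mod_cast hr
  set w₀ : Fin r → ℝ := (e ⟨φ 0, v⟩).2 - σ (φ 0) with hw₀def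
  set w₁ : Fin r → ℝ := (e ⟨φ 1, v'⟩).2 - σ (φ 1) with hw₁def
  have hw₀ : w₀ ≠ 0 := by
    intro h
    apply hv
    have h2 : (e ⟨φ 0, v⟩).2 = σ (φ 0) := by rwa [hw₀def, sub_eq_zero] at h
    have h3 := e.symm_apply_apply_mk (hmem 0) v
    rw [h2] at h3
    rw [← h3]
    exact e.symm_apply_apply_mk (hmem 0) (s (φ 0))
  have hw₁ : w₁ ≠ 0 := by
    intro h
    apply hv'
    have h2 : (e ⟨φ 1, v'⟩).2 = σ (φ 1) := by rwa [hw₁def, sub_eq_zero] at h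
    have h3 := e.symm_apply_apply_mk (hmem 1) v'
    rw [h2] at h3
    rw [← h3]
    exact e.symm_apply_apply_mk (hmem 1) (s (φ 1))
  obtain ⟨W, hW⟩ := (isPathConnected_compl_singleton_of_one_lt_rank hrank
      (0 : Fin r → ℝ)).joinedIn w₀ hw₀ w₁ hw₁
  have hWne : ∀ t, W t ≠ 0 := fun t => hW t
  have key : ∀ t : unitInterval, e.symm (φ t) (σ (φ t) + W t) ≠ s (φ t) := fun t =>
    symm_ne_section s e (hmem t) (hWne t)
  have hFcont : Continuous fun t : unitInterval =>
      (TotalSpace.mk (φ t) (e.symm (φ t) (σ (φ t) + W t)) : TotalSpace (Fin r → ℝ) E) := by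
    have h1 : Continuous fun t : unitInterval => (φ t, σ (φ t) + W t) :=
      hφ.prodMk ((hσ.comp_continuous hφ hmem).add W.continuous)
    exact e.continuousOn_symm.comp_continuous h1 fun t => ⟨hmem t, trivial⟩
  have hF0 : (TotalSpace.mk (φ 0) (e.symm (φ 0) (σ (φ 0) + W 0)) :
      TotalSpace (Fin r → ℝ) E) = ⟨φ 0, v⟩ := by
    have h1 : σ (φ 0) + W 0 = (e ⟨φ 0, v⟩).2 := by
      rw [W.source, hw₀def]; abel
    rw [h1, e.symm_apply_apply_mk (hmem 0)]
  have hF1 : (TotalSpace.mk (φ 1) (e.symm (φ 1) (σ (φ 1) + W 1)) :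
      TotalSpace (Fin r → ℝ) E) = ⟨φ 1, v'⟩ := by
    have h1 : σ (φ 1) + W 1 = (e ⟨φ 1, v'⟩).2 := by
      rw [W.target, hw₁def]; abel
    rw [h1, e.symm_apply_apply_mk (hmem 1)]
  exact ⟨⟨⟨fun t => ⟨φ t, e.symm (φ t) (σ (φ t) + W t)⟩, hFcont⟩, hF0, hF1⟩,
    fun t => key t⟩

/-- Step lemma: reachability of a non-section point propagates along continuous
maps into a trivialization's base set. -/
private lemma step_lemma (hr : 1 < r) (s : ∀ b, E b)
    (hs : Continuous fun b => (TotalSpace.mk b (s b) : TotalSpace (Fin r → ℝ) E))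
    (x : TotalSpace (Fin r → ℝ) E)
    (e : Trivialization (Fin r → ℝ) (TotalSpace.proj : TotalSpace (Fin r → ℝ) E → B))
    {a b : B} (φ : unitInterval → B) (hφ : Continuous φ)
    (hmem : ∀ t, φ t ∈ e.baseSet) (h0 : φ 0 = a) (h1 : φ 1 = b)
    (h : ∃ v : E a, v ≠ s a ∧
      JoinedIn {p : TotalSpace (Fin r → ℝ) E | p.2 ≠ s p.proj} x ⟨a, v⟩) :
    ∃ v : E b, v ≠ s b ∧
      JoinedIn {p : TotalSpace (Fin r → ℝ) E | p.2 ≠ s p.proj} x ⟨b, v⟩ := by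
  subst h0; subst h1
  obtain ⟨v, hv, hj⟩ := h
  have hone := one_ne_zero_pi hr
  refine ⟨e.symm (φ 1) ((e ⟨φ 1, s (φ 1)⟩).2 + 1),
    symm_ne_section s e (hmem 1) hone, hj.trans ?_⟩
  exact core_joined hr s hs e φ hφ hmem v _ hv (symm_ne_section s e (hmem 1) hone)

end Aux

/-- Affine segment in the unit interval from `a` to `b`. -/
private def seg (a b : unitInterval) (u : unitInterval) : unitInterval :=
  ⟨(1 - (u : ℝ)) * a + u * b, by
    constructor <;> nlinarith [u.2.1, u.2.2, a.2.1, a.2.2, b.2.1, b.2.2]⟩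

private lemma seg_zero (a b : unitInterval) : seg a b 0 = a := by
  apply Subtype.ext; simp [seg]

private lemma seg_one (a b : unitInterval) : seg a b 1 = b := by
  apply Subtype.ext; simp [seg]

private lemma seg_cont (a b : unitInterval) : Continuous (seg a b) := by
  apply Continuous.subtype_mk
  exact ((continuous_const.sub continuous_subtype_val).mul continuous_const).add
    (continuous_subtype_val.mul continuous_const)

private lemma seg_dist (a b u : unitInterval) : dist (seg a b u) b ≤ dist a b := by
  simp only [Subtype.dist_eq, seg, Real.dist_eq]
  have h1 : (1 - (u : ℝ)) * a + u * b - b = (1 - (u : ℝ)) * (a - b) := by ring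
  rw [h1, abs_mul, abs_of_nonneg (by linarith [u.2.2] : (0:ℝ) ≤ 1 - u)]
  nlinarith [abs_nonneg ((a : ℝ) - b), u.2.1, u.2.2]

private lemma seg_dist' (a b u : unitInterval) : dist (seg a b u) a ≤ dist a b := by
  simp only [Subtype.dist_eq, seg, Real.dist_eq]
  have h1 : (1 - (u : ℝ)) * a + u * b - a = (u : ℝ) * (b - a) := by ring
  rw [h1, abs_mul, abs_of_nonneg u.2.1]
  have h2 : |(b : ℝ) - a| = |(a : ℝ) - b| := abs_sub_comm _ _
  rw [h2]
  nlinarith [abs_nonneg ((a : ℝ) - b), u.2.1, u.2.2]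

/-- If `E → B` is a rank-`r` real vector bundle over a path-connected
base `B`, `s` is a continuous section, and `r > 1`, then the complement of the
image of `s` in the total space is path-connected. -/
theorem stmt_1 {B : Type*} [TopologicalSpace B] [PathConnectedSpace B]
    {r : ℕ} (hr : 1 < r)
    (E : B → Type*) [∀ b, AddCommGroup (E b)] [∀ b, Module ℝ (E b)]
    [∀ b, TopologicalSpace (E b)] [TopologicalSpace (TotalSpace (Fin r → ℝ) E)]
    [FiberBundle (Fin r → ℝ) E] [VectorBundle ℝ (Fin r → ℝ) E]
    (s : ∀ b, E b)
    (hs : Continuous fun b => (TotalSpace.mk b (s b) : TotalSpace (Fin r → ℝ) E)) :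
    IsPathConnected {p : TotalSpace (Fin r → ℝ) E | p.2 ≠ s p.proj} := by
  rw [isPathConnected_iff]
  constructor
  · -- nonempty
    obtain ⟨b₀⟩ : Nonempty B := PathConnectedSpace.nonempty
    exact ⟨⟨b₀, (trivializationAt (Fin r → ℝ) E b₀).symm b₀
        (((trivializationAt (Fin r → ℝ) E b₀) ⟨b₀, s b₀⟩).2 + 1)⟩,
      symm_ne_section s (trivializationAt (Fin r → ℝ) E b₀)
        (mem_baseSet_trivializationAt (Fin r → ℝ) E b₀) (one_ne_zero_pi hr)⟩
  · intro x hx y hy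
    have γ : Path x.proj y.proj := PathConnectedSpace.somePath x.proj y.proj
    set S : Set unitInterval := {t | ∃ v : E (γ t), v ≠ s (γ t) ∧
      JoinedIn {p : TotalSpace (Fin r → ℝ) E | p.2 ≠ s p.proj} x ⟨γ t, v⟩} with hSdef
    have hiff : ∀ t₀ : unitInterval, ∃ ε > 0, ∀ t : unitInterval,
        dist t t₀ < ε → (t₀ ∈ S ↔ t ∈ S) := by
      intro t₀
      obtain ⟨ε, hε, hball⟩ := Metric.mem_nhds_iff.mp
        (γ.continuous.continuousAt.preimage_mem_nhds
          ((trivializationAt (Fin r → ℝ) E (γ t₀)).open_baseSet.mem_nhds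
            (mem_baseSet_trivializationAt (Fin r → ℝ) E (γ t₀))))
      refine ⟨ε, hε, fun t ht => ⟨fun h => ?_, fun h => ?_⟩⟩
      · -- from t₀ to t, along seg t₀ t
        refine step_lemma hr s hs x (trivializationAt (Fin r → ℝ) E (γ t₀))
          (γ ∘ seg t₀ t) (γ.continuous.comp (seg_cont t₀ t))
          (fun u => hball ?_) (congrArg γ (seg_zero t₀ t)) (congrArg γ (seg_one t₀ t)) h
        have : dist (seg t₀ t u) t₀ ≤ dist t₀ t := seg_dist' t₀ t u
        rw [Metric.mem_ball]
        calc dist (seg t₀ t u) t₀ ≤ dist t₀ t := this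
          _ = dist t t₀ := dist_comm _ _
          _ < ε := ht
      · -- from t to t₀, along seg t t₀
        refine step_lemma hr s hs x (trivializationAt (Fin r → ℝ) E (γ t₀))
          (γ ∘ seg t t₀) (γ.continuous.comp (seg_cont t t₀))
          (fun u => hball ?_) (congrArg γ (seg_zero t t₀)) (congrArg γ (seg_one t t₀)) h
        have : dist (seg t t₀ u) t₀ ≤ dist t t₀ := seg_dist t t₀ u
        rw [Metric.mem_ball]
        exact lt_of_le_of_lt this ht
    have hSclopen : IsClopen S := by
      constructor
      · rw [← isOpen_compl_iff, Metric.isOpen_iff]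
        intro t₀ ht₀
        obtain ⟨ε, hε, hiff'⟩ := hiff t₀
        exact ⟨ε, hε, fun t ht hts =>
          ht₀ ((hiff' t (Metric.mem_ball.mp ht)).mpr hts)⟩
      · rw [Metric.isOpen_iff]
        intro t₀ ht₀
        obtain ⟨ε, hε, hiff'⟩ := hiff t₀
        exact ⟨ε, hε, fun t ht => (hiff' t (Metric.mem_ball.mp ht)).mp ht₀⟩
    have hzero : (0 : unitInterval) ∈ S := by
      have hx' : ∃ v : E x.proj, v ≠ s x.proj ∧
          JoinedIn {p : TotalSpace (Fin r → ℝ) E | p.2 ≠ s p.proj} x ⟨x.proj, v⟩ :=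
        ⟨x.2, hx, JoinedIn.refl hx⟩
      show ∃ v : E (γ 0), v ≠ s (γ 0) ∧
          JoinedIn {p : TotalSpace (Fin r → ℝ) E | p.2 ≠ s p.proj} x ⟨γ 0, v⟩
      rw [show γ (0 : unitInterval) = x.proj from γ.source]
      exact hx'
    have hall : S = Set.univ := hSclopen.eq_univ ⟨0, hzero⟩
    have hone : (1 : unitInterval) ∈ S := hall ▸ Set.mem_univ _
    obtain ⟨v, hv, hj⟩ : ∃ v : E y.proj, v ≠ s y.proj ∧
        JoinedIn {p : TotalSpace (Fin r → ℝ) E | p.2 ≠ s p.proj} x ⟨y.proj, v⟩ := by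
      have h1 : ∃ v : E (γ 1), v ≠ s (γ 1) ∧
          JoinedIn {p : TotalSpace (Fin r → ℝ) E | p.2 ≠ s p.proj} x ⟨γ 1, v⟩ := hone
      rwa [show γ (1 : unitInterval) = y.proj from γ.target] at h1
    have hfin : JoinedIn {p : TotalSpace (Fin r → ℝ) E | p.2 ≠ s p.proj}
        ⟨y.proj, v⟩ ⟨y.proj, y.2⟩ :=
      core_joined hr s hs (trivializationAt (Fin r → ℝ) E y.proj)
        (fun _ => y.proj) continuous_const
        (fun _ => mem_baseSet_trivializationAt (Fin r → ℝ) E y.proj) v y.2 hv hy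
    exact hj.trans hfin
end

section
/- Let (M, g) be a compact connected Riemannian manifold and let f : M → ℂ and φ be smooth with the pointwise identity 0 = 4 Δ f − f + (|f|² + |φ|²) f, where Δ = ∇*∇ is the (positive) rough Laplacian acting on f. Then |f|² ≤ 1 at every point of M. -/
/-! Let `p` be a maximum point of `|f|`, which exists since `M` is compact. There
`Δ|f|² ≥ 0`, and the Bochner identity together with the equation for `f` gives
`0 ≤ 2 Δ|f|² ≤ (1 - |f|² - |φ|²) |f|²` at `p`, hence `|f|² ≤ |f(p)|² ≤ 1`. -/

open Complex ComplexConjugate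

theorem four_mul_re_mul_conj_of_eq_zero {z w : ℂ} {a : ℝ}
    (h : (0 : ℂ) = 4 * w - z + a * z) :
    4 * (w * conj z).re = (1 - a) * ‖z‖ ^ 2 := by
  have hw : 4 * w = (1 - a) * z := by linear_combination -h
  have hmul : 4 * (w * conj z) = (((1 - a) * ‖z‖ ^ 2 : ℝ) : ℂ) := by
    rw [← mul_assoc, hw, mul_assoc, mul_conj']
    push_cast
    ring
  have hre := congrArg re hmul
  rw [ofReal_re, ← ofReal_ofNat, re_ofReal_mul] at hre
  exact hre

theorem le_one_of_nonneg_one_sub_add_mul {s t : ℝ} (hs : 0 ≤ s) (ht : 0 ≤ t)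
    (h : 0 ≤ (1 - (s + t)) * s) : s ≤ 1 := by
  nlinarith

theorem stmt_3_general {M : Type*} [TopologicalSpace M] [CompactSpace M]
    (f φ : M → ℂ) (hf : Continuous f)
    (Δcf : M → ℂ)        -- the function ∇*∇f
    (ΔRnormsq : M → ℝ)   -- the function ∇*∇(|f|²)
    (gradsq : M → ℝ)     -- the function |∇f|²
    (hgrad_nonneg : ∀ x, 0 ≤ gradsq x)
    (hBochner : ∀ x, 2 * ΔRnormsq x =
      4 * (Δcf x * (starRingEnd ℂ) (f x)).re - 4 * gradsq x)
    (hmax : ∀ p, (∀ x, ‖f x‖ ≤ ‖f p‖) → 0 ≤ ΔRnormsq p)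
    (heq : ∀ x, (0 : ℂ) =
      4 * Δcf x - f x + ((‖f x‖ ^ 2 + ‖φ x‖ ^ 2 : ℝ) : ℂ) * f x) :
    ∀ x, ‖f x‖ ^ 2 ≤ 1 := by
  intro x
  obtain ⟨p, hp⟩ := hf.norm.exists_forall_ge' x (by simp)
  have hre := four_mul_re_mul_conj_of_eq_zero (heq p)
  have hp_le_one : ‖f p‖ ^ 2 ≤ 1 :=
    le_one_of_nonneg_one_sub_add_mul (t := ‖φ p‖ ^ 2) (by positivity) (by positivity)
      (by linarith [hBochner p, hgrad_nonneg p, hmax p hp])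
  calc ‖f x‖ ^ 2 ≤ ‖f p‖ ^ 2 := by gcongr; exact hp x
    _ ≤ 1 := hp_le_one

/-- On a compact connected Riemannian manifold, if smooth functions
`f : M → ℂ` and `φ` satisfy `0 = 4 Δf − f + (|f|² + |φ|²) f` pointwise, where
`Δ = ∇*∇` is the positive rough Laplacian, then `|f|² ≤ 1` everywhere.

The rough Laplacian is abstracted by its action `Δc f` on `f` and `ΔR` on real
functions, related by the Bochner identity
`2 ΔR|f|² = 4 Re⟨Δc f, f⟩ − 4 |∇f|²` (with `gradsq = |∇f|² ≥ 0`), together with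
the fact that the positive Laplacian of `|f|²` is nonnegative at a maximum. -/
theorem stmt_3 {M : Type*} [TopologicalSpace M] [CompactSpace M]
    [ConnectedSpace M] [Nonempty M]
    (f φ : M → ℂ) (hf : Continuous f) (hφ : Continuous φ)
    (Δcf : M → ℂ)        -- the function ∇*∇f
    (ΔRnormsq : M → ℝ)   -- the function ∇*∇(|f|²)
    (gradsq : M → ℝ)     -- the function |∇f|²
    (hgrad_nonneg : ∀ x, 0 ≤ gradsq x)
    (hBochner : ∀ x, 2 * ΔRnormsq x =
      4 * (Δcf x * (starRingEnd ℂ) (f x)).re - 4 * gradsq x)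
    (hmax : ∀ p, (∀ x, ‖f x‖ ≤ ‖f p‖) → 0 ≤ ΔRnormsq p)
    (heq : ∀ x, (0 : ℂ) =
      4 * Δcf x - f x + ((‖f x‖ ^ 2 + ‖φ x‖ ^ 2 : ℝ) : ℂ) * f x) :
    ∀ x, ‖f x‖ ^ 2 ≤ 1 :=
  stmt_3_general f φ hf Δcf ΔRnormsq gradsq hgrad_nonneg hBochner hmax heq
end

section
/- Let (M, g) be a compact connected Riemannian manifold, and suppose smooth functions f (complex-valued) and φ satisfy both the pointwise equation 0 = 4∇*∇f − f + (|f|² + |φ|²) f and the integral identity ∫_M (|f|² − 1) dμ = ∫_M |φ|² dμ. Then |f| ≡ 1, φ ≡ 0, and ∇f ≡ 0 on M. -/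
/-!
Multiplying the equation by `conj f` and inserting it into the Bochner identity gives
`2 ∇*∇|f|² = (1 - |f|² - |φ|²)|f|² - 4|∇f|²`. At a maximum of `|f|` the left side is
nonnegative, so `|f| ≤ 1` there and hence everywhere. Then `∫ (|f|² - 1) ≤ 0 ≤ ∫ |φ|²`, and the
integral identity forces both continuous integrands to vanish identically; with `|f|` constant
the Laplacian term drops out and the identity above leaves `|∇f|² = 0`.
-/

open MeasureTheory Complex

lemma four_mul_re_mul_conj_eq {z w : ℂ} {c : ℝ} (h : (0 : ℂ) = 4 * w - z + (c : ℂ) * z) :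
    4 * (w * (starRingEnd ℂ) z).re = (1 - c) * ‖z‖ ^ 2 := by
  have hz : z * (starRingEnd ℂ) z = ((‖z‖ ^ 2 : ℝ) : ℂ) := by
    rw [mul_conj, normSq_eq_norm_sq]
  have hw : ((4 : ℝ) : ℂ) * (w * (starRingEnd ℂ) z) = (((1 - c) * ‖z‖ ^ 2 : ℝ) : ℂ) := by
    push_cast at hz ⊢
    linear_combination -(starRingEnd ℂ) z * h + (1 - (c : ℂ)) * hz
  have hre := congrArg re hw
  rwa [re_ofReal_mul, ofReal_re] at hre

lemma le_one_of_nonneg_mul_sq {a b : ℝ} (hb : 0 ≤ b)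
    (h : 0 ≤ (1 - a ^ 2 - b) * a ^ 2) : a ≤ 1 := by
  by_contra! ha1
  have : (1 - a ^ 2 - b) * a ^ 2 < 0 :=
    mul_neg_of_neg_of_pos (by nlinarith) (by positivity)
  linarith

section CompactSpace

variable {X : Type*} [TopologicalSpace X] [CompactSpace X] [MeasurableSpace X]
  [OpensMeasurableSpace X] {μ : Measure X} [μ.IsOpenPosMeasure] [IsFiniteMeasureOnCompacts μ]

lemma Continuous.eq_zero_of_integral_eq_zero_of_nonneg {g : X → ℝ} (hg : Continuous g)
    (hg₀ : 0 ≤ g) (hint : ∫ x, g x ∂μ = 0) : g = 0 := by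
  by_contra! hne
  obtain ⟨x, hx⟩ := Function.ne_iff.mp hne
  have := hg.integral_pos_of_hasCompactSupport_nonneg_nonzero (μ := μ)
    (HasCompactSupport.of_compactSpace g) hg₀ hx
  linarith

lemma eq_zero_of_integral_eq_of_nonpos_of_nonneg {u v : X → ℝ} (hu : Continuous u)
    (hv : Continuous v) (hu₀ : u ≤ 0) (hv₀ : 0 ≤ v) (hint : ∫ x, u x ∂μ = ∫ x, v x ∂μ) :
    u = 0 ∧ v = 0 := by
  have hu_int : ∫ x, u x ∂μ ≤ 0 := integral_nonpos hu₀
  have hv_int : 0 ≤ ∫ x, v x ∂μ := integral_nonneg hv₀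
  refine ⟨neg_eq_zero.mp (hu.neg.eq_zero_of_integral_eq_zero_of_nonneg (μ := μ)
    (neg_nonneg.mpr hu₀) ?_), hv.eq_zero_of_integral_eq_zero_of_nonneg (μ := μ) hv₀ (by linarith)⟩
  rw [Pi.neg_def, integral_neg]
  linarith

end CompactSpace

theorem stmt_4_general {M : Type*} [TopologicalSpace M] [CompactSpace M]
    [Nonempty M]
    [MeasurableSpace M] [BorelSpace M]
    (μ : Measure M) [IsFiniteMeasure μ] [μ.IsOpenPosMeasure]
    (f φ : M → ℂ) (hf : Continuous f) (hφ : Continuous φ)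
    (Δcf : M → ℂ)        -- the function ∇*∇f
    (ΔRnormsq : M → ℝ)   -- the function ∇*∇(|f|²)
    (gradsq : M → ℝ)     -- the function |∇f|²
    (hgrad_nonneg : ∀ x, 0 ≤ gradsq x)
    (hBochner : ∀ x, 2 * ΔRnormsq x =
      4 * (Δcf x * (starRingEnd ℂ) (f x)).re - 4 * gradsq x)
    (hmax : ∀ p, (∀ x, ‖f x‖ ≤ ‖f p‖) → 0 ≤ ΔRnormsq p)
    (hconst : (∀ x y, ‖f x‖ = ‖f y‖) → ∀ x, ΔRnormsq x = 0)
    (heq : ∀ x, (0 : ℂ) =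
      4 * Δcf x - f x + ((‖f x‖ ^ 2 + ‖φ x‖ ^ 2 : ℝ) : ℂ) * f x)
    (hint : ∫ x, (‖f x‖ ^ 2 - 1) ∂μ = ∫ x, ‖φ x‖ ^ 2 ∂μ) :
    (∀ x, ‖f x‖ = 1) ∧ (∀ x, φ x = 0) ∧ (∀ x, gradsq x = 0) := by
  have key : ∀ x, 2 * ΔRnormsq x =
      (1 - ‖f x‖ ^ 2 - ‖φ x‖ ^ 2) * ‖f x‖ ^ 2 - 4 * gradsq x := fun x => by
    rw [hBochner x, four_mul_re_mul_conj_eq (heq x)]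
    ring
  obtain ⟨p, -, hp⟩ := isCompact_univ.exists_isMaxOn Set.univ_nonempty hf.norm.continuousOn
  have hp_max : ∀ x, ‖f x‖ ≤ ‖f p‖ := fun x => hp (Set.mem_univ x)
  have hfp : ‖f p‖ ≤ 1 := le_one_of_nonneg_mul_sq (sq_nonneg _) (by
    nlinarith [key p, hmax p hp_max, hgrad_nonneg p])
  obtain ⟨hf_sq, hφ_sq⟩ := eq_zero_of_integral_eq_of_nonpos_of_nonneg (μ := μ)
    (u := fun x => ‖f x‖ ^ 2 - 1) (v := fun x => ‖φ x‖ ^ 2)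
    ((hf.norm.pow 2).sub continuous_const) (hφ.norm.pow 2)
    (fun x => show ‖f x‖ ^ 2 - 1 ≤ 0 by nlinarith [hp_max x, norm_nonneg (f x)]) (fun x => sq_nonneg _) hint
  have hf_one : ∀ x, ‖f x‖ = 1 := fun x =>
    (pow_eq_one_iff_of_nonneg (norm_nonneg _) two_ne_zero).mp (sub_eq_zero.mp (congrFun hf_sq x))
  have hφ_zero : ∀ x, φ x = 0 := fun x => by simpa using congrFun hφ_sq x
  refine ⟨hf_one, hφ_zero, fun x => ?_⟩
  have hΔ : ΔRnormsq x = 0 := hconst (fun a b => by rw [hf_one a, hf_one b]) x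
  have := key x
  simp only [hΔ, hf_one x, hφ_zero x, norm_zero] at this
  linarith

/-- On a compact connected Riemannian manifold, if smooth `f : M → ℂ`
and `φ` satisfy `0 = 4∇*∇f − f + (|f|² + |φ|²) f` pointwise together with the
integral identity `∫ (|f|² − 1) dμ = ∫ |φ|² dμ`, then `|f| ≡ 1`, `φ ≡ 0` and
`∇f ≡ 0`.

The rough Laplacian `∇*∇` is abstracted via its value `Δcf = ∇*∇f` on `f`, its
value `ΔRnormsq = ∇*∇(|f|²)` on `|f|²`, and `gradsq = |∇f|²`, related by the
Bochner identity, with the maximum principle for the positive Laplacian and the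
vanishing of the Laplacian on constants. -/
theorem stmt_4 {M : Type*} [TopologicalSpace M] [CompactSpace M]
    [ConnectedSpace M] [Nonempty M]
    [MeasurableSpace M] [BorelSpace M]
    (μ : Measure M) [IsFiniteMeasure μ] [μ.IsOpenPosMeasure]
    (f φ : M → ℂ) (hf : Continuous f) (hφ : Continuous φ)
    (Δcf : M → ℂ)        -- the function ∇*∇f
    (ΔRnormsq : M → ℝ)   -- the function ∇*∇(|f|²)
    (gradsq : M → ℝ)     -- the function |∇f|²
    (hgrad_nonneg : ∀ x, 0 ≤ gradsq x)
    (hBochner : ∀ x, 2 * ΔRnormsq x =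
      4 * (Δcf x * (starRingEnd ℂ) (f x)).re - 4 * gradsq x)
    (hmax : ∀ p, (∀ x, ‖f x‖ ≤ ‖f p‖) → 0 ≤ ΔRnormsq p)
    (hconst : (∀ x y, ‖f x‖ = ‖f y‖) → ∀ x, ΔRnormsq x = 0)
    (heq : ∀ x, (0 : ℂ) =
      4 * Δcf x - f x + ((‖f x‖ ^ 2 + ‖φ x‖ ^ 2 : ℝ) : ℂ) * f x)
    (hint : ∫ x, (‖f x‖ ^ 2 - 1) ∂μ = ∫ x, ‖φ x‖ ^ 2 ∂μ) :
    (∀ x, ‖f x‖ = 1) ∧ (∀ x, φ x = 0) ∧ (∀ x, gradsq x = 0) :=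
  stmt_4_general μ f φ hf hφ Δcf ΔRnormsq gradsq hgrad_nonneg hBochner hmax hconst heq hint
end
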